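/- arXiv:math/0601567 — 9 statements merged into one kernel-verified Lean document; each statement's English description precedes it below -/
import Mathlib

section
/- Let R be a commutative ring and x an element of the Jacobson radical of R. Then the localization map R → R_x is surjective (equivalently, the first Čech cohomology H^1_x(R) = R_x/R vanishes) if and only if x is nilpotent. -/
/-!
If `R → R_x` is onto, a preimage `r` of `1/x` satisfies `x * r = 1` in `R_x`, hence
`x ^ n * (1 - x * r) = 0` in `R` for some `n`. When `x` lies in the Jacobson radical, `1 - x * r`
is a unit, so `x ^ n = 0`. Conversely, inverting a nilpotent element gives the zero ring.
-/

namespace IsLocalization.Away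

variable {R S : Type*} [CommRing R] [CommRing S] [Algebra R S] {x : R} [IsLocalization.Away x S]

theorem exists_pow_mul_sub_eq_zero_of_surjective (hsurj : Function.Surjective (algebraMap R S)) :
    ∃ (n : ℕ) (r : R), x ^ n * (1 - x * r) = 0 := by
  obtain ⟨r, hr⟩ := hsurj (invSelf x)
  have hxr : algebraMap R S (x * r) = algebraMap R S 1 := by
    rw [map_mul, hr, map_one, mul_invSelf]
  obtain ⟨⟨_, n, rfl⟩, hn⟩ := (IsLocalization.eq_iff_exists (Submonoid.powers x) S).mp hxr
  exact ⟨n, r, by rw [mul_sub, mul_one, hn, mul_one, sub_self]⟩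

theorem subsingleton_of_isNilpotent (hx : IsNilpotent x) : Subsingleton S :=
  IsLocalization.subsingleton (M := Submonoid.powers x) (by obtain ⟨n, hn⟩ := hx; exact ⟨n, hn⟩)

end IsLocalization.Away

theorem pow_eq_zero_of_pow_mul_sub_eq_zero_of_mem_jacobson_bot {R : Type*} [CommRing R] {x : R}
    (hx : x ∈ (⊥ : Ideal R).jacobson) {n : ℕ} {r : R} (h : x ^ n * (1 - x * r) = 0) :
    x ^ n = 0 := by
  have hunit : IsUnit (1 - x * r) := by
    simpa [sub_eq_add_neg, add_comm] using Ideal.mem_jacobson_bot.mp hx (-r)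
  exact hunit.mul_left_eq_zero.mp h

/-- If `x` lies in the Jacobson radical of a commutative ring `R`, then the localization map
`R → R_x` is surjective (equivalently, `H^1_x(R) = R_x/R` vanishes) iff `x` is nilpotent. -/
theorem stmt_0 {R : Type*} [CommRing R] (x : R) (hx : x ∈ (⊥ : Ideal R).jacobson) :
    Function.Surjective (algebraMap R (Localization.Away x)) ↔ IsNilpotent x := by
  constructor
  · intro hsurj
    obtain ⟨n, r, h⟩ := IsLocalization.Away.exists_pow_mul_sub_eq_zero_of_surjective (x := x) hsurj
    exact ⟨n, pow_eq_zero_of_pow_mul_sub_eq_zero_of_mem_jacobson_bot hx h⟩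
  · intro hnil
    have := IsLocalization.Away.subsingleton_of_isNilpotent (S := Localization.Away x) hnil
    exact fun _ ↦ ⟨0, Subsingleton.elim _ _⟩
end

section
/- Let R be a commutative ring, I = (x_1, ..., x_ℓ)R a finitely generated ideal, and M an R-module. Then the annihilator (0 :_M I) is zero if and only if the element f = x_1 + x_2 t + ... + x_ℓ t^{ℓ-1} of the polynomial ring R[t] is a non-zero-divisor on R[t] ⊗_R M. -/
/-!
McCoy's theorem for modules. If `P • q = 0` with `q` of degree `n`, go down through the
coefficients of `P`: once those of index `> i` kill `q`, the coefficient of `P • q` in degree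
`i + n` is `P.coeff i • q.coeff n`, so `P.coeff i • q` has degree `< n` and is still killed by `P`;
by induction on `n` it vanishes. Hence every coefficient of `q` is killed by all coefficients of
`P`. Conversely a nonzero `m` killed by the coefficients of `P` gives the solution `q = m`.
For `P = f` the coefficients are the generators `x_i`, whose common annihilator is `(0 :_M I)`.
-/

open Polynomial

theorem Polynomial.coeff_sum_fin_monomial {R : Type*} [Semiring R] {ℓ : ℕ} (x : Fin ℓ → R)
    (j : ℕ) :
    (∑ i : Fin ℓ, monomial (i : ℕ) (x i)).coeff j = if h : j < ℓ then x ⟨j, h⟩ else 0 := by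
  simp only [finsetSum_coeff, coeff_monomial]
  split_ifs with h
  · rw [Finset.sum_eq_single ⟨j, h⟩ (fun i _ hi => if_neg fun hij => hi (Fin.ext hij)) (by simp)]
    simp
  · exact Finset.sum_eq_zero fun i _ => if_neg fun (hij : (i : ℕ) = j) => h (hij ▸ i.isLt)

theorem Ideal.forall_mem_span_smul_eq_zero_iff {R M : Type*} [CommRing R] [AddCommGroup M]
    [Module R M] (s : Set R) (m : M) :
    (∀ r ∈ Ideal.span s, r • m = 0) ↔ ∀ r ∈ s, r • m = 0 :=
  ⟨fun h r hr => h r (subset_span hr),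
    fun h => span_le (I := LinearMap.ker (LinearMap.toSpanSingleton R M m)).mpr h⟩

namespace PolynomialModule

variable {R M : Type*} [CommRing R] [AddCommGroup M] [Module R M]

theorem coeff_smul (r : R) (q : PolynomialModule R M) (k : ℕ) :
    (r • q).coeff k = r • q.coeff k :=
  rfl

theorem exists_forall_le_coeff_eq_zero (q : PolynomialModule R M) :
    ∃ n, ∀ k, n ≤ k → q.coeff k = 0 := by
  obtain ⟨n, hn⟩ := q.coeff.support.bddAbove
  refine ⟨n + 1, fun k hk => Finsupp.notMem_support_iff.mp fun hmem => ?_⟩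
  have := hn hmem
  omega

theorem smul_single_zero_eq_zero_iff (P : R[X]) (m : M) :
    P • single R 0 m = 0 ↔ ∀ i, P.coeff i • m = 0 := by
  simp only [← coeff_eq_zero, Finsupp.ext_iff, smul_single_apply, Nat.zero_le, if_true,
    Nat.sub_zero]
  rfl

theorem coeff_smul_add_eq {P : R[X]} {q : PolynomialModule R M} {i n : ℕ}
    (hq : ∀ k, n < k → q.coeff k = 0) (hP : ∀ j, i < j → P.coeff j • q = 0) :
    (P • q).coeff (i + n) = P.coeff i • q.coeff n := by
  rw [smul_apply, Finset.sum_eq_single (i, n) _ (by simp)]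
  rintro ⟨a, b⟩ hab hne
  have hab : a + b = i + n := Finset.HasAntidiagonal.mem_antidiagonal.mp hab
  rcases lt_or_gt_of_ne (fun h : a = i => hne (by ext <;> simp <;> omega)) with ha | ha
  · rw [hq b (by omega), smul_zero]
  · rw [← coeff_smul, hP a ha, coeff_zero, Finsupp.zero_apply]

theorem eq_zero_of_smul_eq_zero {P : R[X]} (hM : ∀ m : M, (∀ i, P.coeff i • m = 0) → m = 0)
    {q : PolynomialModule R M} (hPq : P • q = 0) : q = 0 := by
  obtain ⟨n, hn⟩ := exists_forall_le_coeff_eq_zero q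
  induction n generalizing q with
  | zero => exact coeff_eq_zero.mp (Finsupp.ext fun k => hn k k.zero_le)
  | succ n ih =>
    have hkill : ∀ i, P.coeff i • q = 0 := by
      refine Nat.strong_decreasing_induction
        ⟨P.natDegree, fun j hj => by rw [coeff_eq_zero_of_natDegree_lt hj, zero_smul]⟩
        fun i hi => ih ?_ ?_
      · rw [smul_comm, hPq, smul_zero]
      · intro k hk
        rcases hk.lt_or_eq with hk | rfl
        · rw [coeff_smul, hn k hk, smul_zero]
        · rw [coeff_smul, ← coeff_smul_add_eq hn hi, hPq, coeff_zero, Finsupp.zero_apply]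
    exact coeff_eq_zero.mp (Finsupp.ext fun k => hM _ fun i => by
      rw [← coeff_smul, hkill, coeff_zero, Finsupp.zero_apply])

theorem forall_smul_eq_zero_imp_eq_zero_iff (P : R[X]) :
    (∀ q : PolynomialModule R M, P • q = 0 → q = 0) ↔
      ∀ m : M, (∀ i, P.coeff i • m = 0) → m = 0 := by
  refine ⟨fun h m hm => ?_, fun hM _ => eq_zero_of_smul_eq_zero hM⟩
  have h0 := h _ ((smul_single_zero_eq_zero_iff P m).mpr hm)
  simpa using congr(($h0).coeff 0)

end PolynomialModule

/-- Hochster's lemma: for a finitely generated ideal `I = (x_1, ..., x_ℓ)` of `R` and an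
`R`-module `M`, the annihilator `(0 :_M I)` is zero iff
`f = x_1 + x_2 t + ... + x_ℓ t^{ℓ-1} ∈ R[t]` is a non-zero-divisor on `R[t] ⊗_R M`
(identified with the module of polynomials with coefficients in `M`). -/
theorem stmt_2 {R : Type*} [CommRing R] {M : Type*} [AddCommGroup M] [Module R M]
    {ℓ : ℕ} (x : Fin ℓ → R) :
    (∀ m : M, (∀ r ∈ Ideal.span (Set.range x), r • m = 0) → m = 0) ↔
      (∀ p : PolynomialModule R M,
        (∑ i : Fin ℓ, Polynomial.monomial (i : ℕ) (x i)) • p = 0 → p = 0) := by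
  have hcoeff : ∀ m : M,
      (∀ j, (∑ i : Fin ℓ, monomial (i : ℕ) (x i)).coeff j • m = 0) ↔ ∀ i, x i • m = 0 := by
    refine fun m => ⟨fun h i => ?_, fun h j => ?_⟩
    · simpa only [coeff_sum_fin_monomial, dif_pos i.isLt] using h i
    · rw [coeff_sum_fin_monomial]
      split_ifs
      exacts [h _, zero_smul R m]
  simp only [PolynomialModule.forall_smul_eq_zero_imp_eq_zero_iff, hcoeff,
    Ideal.forall_mem_span_smul_eq_zero_iff, Set.forall_mem_range]
end

section
/- Let R be a commutative ring, M an R-module, x a sequence of elements of R generating an ideal I, and u ∈ I a non-zero-divisor on M. If for some i the multiplication-by-u map on the Čech cohomology H^i_x(M) is injective, then H^i_x(M) = 0. -/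
/-- The natural map between localizations of a module at powers of two elements
`a ∣ b`, sending `m/1` to `m/1`. -/

noncomputable def cechLoc {R : Type*} [CommRing R] {M : Type*} [AddCommGroup M] [Module R M]
    (a b : R) (hab : a ∣ b) :
    LocalizedModule (Submonoid.powers a) M →ₗ[R] LocalizedModule (Submonoid.powers b) M :=
  LocalizedModule.lift _ (LocalizedModule.mkLinearMap (Submonoid.powers b) M) (by
    rintro ⟨s, n, rfl⟩
    obtain ⟨c, rfl⟩ := hab
    set f := algebraMap R (Module.End R (LocalizedModule (Submonoid.powers (a * c)) M)) with hf
    obtain ⟨u, hu⟩ := IsLocalizedModule.map_units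
      (LocalizedModule.mkLinearMap (Submonoid.powers (a * c)) M)
      (⟨(a * c) ^ n, n, rfl⟩ : Submonoid.powers (a * c))
    have hcomm : Commute (f (a ^ n)) ↑u := by
      have : Commute (f (a ^ n)) (f ((a * c) ^ n)) := by
        simp only [Commute, SemiconjBy, ← map_mul, mul_comm]
      rwa [← hu] at this
    refine ⟨⟨f (a ^ n), f (c ^ n) * ↑u⁻¹, ?_, ?_⟩, rfl⟩
    · rw [← mul_assoc, ← map_mul, ← mul_pow, ← hu]
      exact u.mul_inv
    · rw [mul_assoc, ← (hcomm.units_inv_right).eq, ← mul_assoc, ← map_mul]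
      have : c ^ n * a ^ n = (a * c) ^ n := by ring
      rw [this, ← hu]
      exact u.mul_inv)

open scoped BigOperators
open Classical

noncomputable section

variable {R : Type*} [CommRing R]

/-- Degree `i` term of the Čech complex of the sequence `x` with coefficients in `M`:
the product over `i`-element subsets `t` of the index set of the localization of `M`
at the product of the `x j` for `j ∈ t`. -/
noncomputable abbrev CechC {ℓ : ℕ} (x : Fin ℓ → R) (M : Type*) [AddCommGroup M] [Module R M]
    (i : ℕ) : Type _ :=
  ∀ t : {t : Finset (Fin ℓ) // t.card = i}, LocalizedModule (Submonoid.powers (∏ j ∈ t.1, x j)) M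

/-- The Čech differential `C^i → C^{i+1}`: the alternating sum of the further-localization
maps. -/
noncomputable def cechD {ℓ : ℕ} (x : Fin ℓ → R) (M : Type*) [AddCommGroup M] [Module R M]
    (i : ℕ) : CechC x M i →ₗ[R] CechC x M (i + 1) where
  toFun m t := ∑ j ∈ (t.1).attach,
    ((-1 : ℤ) ^ ((t.1.filter (· < j.1)).card)) •
      cechLoc (∏ k ∈ t.1.erase j.1, x k) (∏ k ∈ t.1, x k)
        (Finset.prod_dvd_prod_of_subset _ _ _ (Finset.erase_subset _ _))
        (m ⟨t.1.erase j.1, by rw [Finset.card_erase_of_mem j.2, t.2]; omega⟩)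
  map_add' := by
    intro a b
    funext t
    simp [Pi.add_apply, map_add, smul_add, Finset.sum_add_distrib]
    rw [← Finset.sum_add_distrib]
    refine Finset.sum_congr rfl fun j _ => ?_
    first
    | exact smul_add _ _ _
    | exact zsmul_add _ _ _
  map_smul' := by
    intro r a
    funext t
    simp [Pi.smul_apply, map_smul, Finset.smul_sum, smul_comm r]

/-- The submodule of Čech coboundaries in degree `i`. -/
noncomputable def cechPrevRange {ℓ : ℕ} (x : Fin ℓ → R) (M : Type*) [AddCommGroup M]
    [Module R M] : (i : ℕ) → Submodule R (CechC x M i)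
  | 0 => ⊥
  | (i + 1) => LinearMap.range (cechD x M i)

/-- The `i`-th Čech cohomology of `M` with respect to the sequence `x`:
cocycles modulo coboundaries. -/
noncomputable abbrev CechH {ℓ : ℕ} (x : Fin ℓ → R) (M : Type*) [AddCommGroup M] [Module R M]
    (i : ℕ) : Type _ :=
  LinearMap.ker (cechD x M i) ⧸
    (cechPrevRange x M i).comap (LinearMap.ker (cechD x M i)).subtype

/-! After inverting `x j` the Čech complex is contractible, the homotopy sending a cochain `c`
to `s ↦ ± c (insert j s)` on the faces `s ∌ j`. Over `R` this homotopy exists only after clearing a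
power of `x j` from the denominators; for a cocycle `c` it then yields `d h = x j ^ N • c` up to
`x j`-power torsion. So every class in `H^i_x(M)` is killed by a power of each `x j`, hence by a
power of every `u ∈ (x)`, and injectivity of `u • ·` forces the class to vanish. -/

section Torsion

variable {N : Type*} [AddCommGroup N] [Module R N]

theorem exists_pow_smul_eq_zero_pi {ι : Type*} [Finite ι] {V : ι → Type*}
    [∀ i, AddCommGroup (V i)] [∀ i, Module R (V i)] {r : R} {v : ∀ i, V i}
    (h : ∀ i, ∀ᶠ n in Filter.atTop, r ^ n • v i = 0) : ∃ n : ℕ, r ^ n • v = 0 :=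
  let ⟨n, hn⟩ := (Filter.eventually_all.2 h).exists
  ⟨n, funext hn⟩

theorem eventually_pow_smul_mem {p : Submodule R N} {r : R} {v : N} {n : ℕ}
    (h : r ^ n • v ∈ p) : ∀ᶠ k in Filter.atTop, r ^ k • v ∈ p :=
  Filter.eventually_atTop.2 ⟨n, fun k hk => by
    rw [← Nat.sub_add_cancel hk, pow_add, mul_smul]
    exact p.smul_mem _ h⟩

theorem exists_pow_smul_eq_zero_of_mem_span {s : Set R} {v : N}
    (h : ∀ r ∈ s, ∃ k : ℕ, r ^ k • v = 0) {u : R} (hu : u ∈ Ideal.span s) :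
    ∃ k : ℕ, u ^ k • v = 0 := by
  have hle : Ideal.span s ≤ (Submodule.span R {v}).annihilator.radical :=
    Ideal.span_le.2 fun r hr => by
      obtain ⟨k, hk⟩ := h r hr
      exact ⟨k, (Submodule.mem_annihilator_span_singleton _ _).2 hk⟩
  obtain ⟨k, hk⟩ := hle hu
  exact ⟨k, (Submodule.mem_annihilator_span_singleton _ _).1 hk⟩

theorem eq_zero_of_pow_smul_eq_zero {u : R} (hinj : Function.Injective (fun v : N => u • v))
    {v : N} {k : ℕ} (h : u ^ k • v = 0) : v = 0 :=
  hinj.iterate k <| by rw [smul_iterate_apply, smul_iterate_apply, smul_zero, h]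

end Torsion

section Localization

variable {M : Type*} [AddCommGroup M] [Module R M]

theorem isUnit_algebraMap_end_of_dvd {a b : R} (hab : a ∣ b) :
    IsUnit (algebraMap R (Module.End R (LocalizedModule (Submonoid.powers b) M)) a) := by
  obtain ⟨c, rfl⟩ := hab
  have hac := IsLocalizedModule.Away.isUnit_algebraMap
    (LocalizedModule.mkLinearMap (Submonoid.powers (a * c)) M) (a * c)
  rw [map_mul] at hac
  exact ((Commute.all a c).map _).isUnit_mul_iff.mp hac |>.1

theorem isUnit_algebraMap_end_powers_of_dvd {a b : R} (hab : a ∣ b) (s : Submonoid.powers a) :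
    IsUnit (algebraMap R (Module.End R (LocalizedModule (Submonoid.powers b) M)) s) := by
  obtain ⟨_, n, rfl⟩ := s
  simpa using (isUnit_algebraMap_end_of_dvd hab).pow n

theorem cechLoc_comp_mkLinearMap (a b : R) (hab : a ∣ b) :
    cechLoc (M := M) a b hab ∘ₗ LocalizedModule.mkLinearMap (Submonoid.powers a) M =
      LocalizedModule.mkLinearMap (Submonoid.powers b) M :=
  LocalizedModule.lift_comp _ _ _

theorem cechLoc_cechLoc {a b r : R} (hab : a ∣ b) (hbr : b ∣ r)
    (z : LocalizedModule (Submonoid.powers a) M) :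
    cechLoc b r hbr (cechLoc a b hab z) = cechLoc a r (hab.trans hbr) z := by
  have hcomp : cechLoc b r hbr ∘ₗ cechLoc a b hab = cechLoc (M := M) a r (hab.trans hbr) :=
    IsLocalizedModule.ext (Submonoid.powers a)
      (LocalizedModule.mkLinearMap (Submonoid.powers a) M)
      (isUnit_algebraMap_end_powers_of_dvd (hab.trans hbr)) (by
        rw [LinearMap.comp_assoc, cechLoc_comp_mkLinearMap, cechLoc_comp_mkLinearMap,
          cechLoc_comp_mkLinearMap])
  exact LinearMap.congr_fun hcomp z

theorem cechLoc_mk_pow (a c : R) (hab : a ∣ a * c) (m : M) (n : ℕ) :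
    cechLoc a (a * c) hab (LocalizedModule.mk m (Submonoid.pow a n)) =
      c ^ n • LocalizedModule.mk m (Submonoid.pow (a * c) n) := by
  rw [cechLoc, LocalizedModule.lift_mk, Module.End.algebraMap_isUnit_inv_apply_eq_iff,
    LocalizedModule.mkLinearMap_apply, LocalizedModule.smul'_mk, LocalizedModule.smul'_mk,
    Submonoid.pow_apply, smul_smul, ← mul_pow]
  exact (LocalizedModule.mk_cancel (Submonoid.pow (a * c) n) m).symm

theorem isLocalizedModuleAway_cechLoc {a c b : R} (h : a * c = b) (hab : a ∣ b) :
    IsLocalizedModule.Away c (cechLoc (M := M) a b hab) := by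
  subst h
  refine .mk_of_addCommGroup (isUnit_algebraMap_end_of_dvd (dvd_mul_left c a)) ?_ ?_
  · intro y
    induction y using LocalizedModule.induction_on with
    | h m s =>
      obtain ⟨_, n, rfl⟩ := s
      exact ⟨n, LocalizedModule.mk m (Submonoid.pow a n), (cechLoc_mk_pow a c hab m n).symm⟩
  · intro z hz
    induction z using LocalizedModule.induction_on with
    | h m s =>
      obtain ⟨_, n, rfl⟩ := s
      rw [← Submonoid.pow_apply, cechLoc_mk_pow, LocalizedModule.smul'_mk,
        ← LocalizedModule.zero_mk 1, LocalizedModule.mk_eq] at hz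
      obtain ⟨⟨_, k, rfl⟩, hk⟩ := hz
      refine ⟨k + n, ?_⟩
      rw [LocalizedModule.smul'_mk, ← LocalizedModule.zero_mk 1, LocalizedModule.mk_eq]
      refine ⟨Submonoid.pow a k, ?_⟩
      simp only [Submonoid.smul_def, Submonoid.pow_apply, one_smul, smul_zero, smul_smul]
        at hk ⊢
      rw [← hk, pow_add, mul_pow]
      ring_nf

theorem eventually_pow_smul_eq_zero_of_cechLoc_eq_zero {a c b : R} (h : a * c = b) (hab : a ∣ b)
    {z : LocalizedModule (Submonoid.powers a) M} (hz : cechLoc a b hab z = 0) :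
    ∀ᶠ n in Filter.atTop, c ^ n • z = 0 := by
  have := isLocalizedModuleAway_cechLoc (M := M) h hab
  obtain ⟨n, hn⟩ := IsLocalizedModule.Away.exists_of_eq (f := cechLoc a b hab) c
    (x := z) (y := 0) (by rw [hz, map_zero])
  rw [smul_zero, ← Submodule.mem_bot R] at hn
  exact (eventually_pow_smul_mem hn).mono fun _ => (Submodule.mem_bot R).1

end Localization

theorem Finset.card_filter_lt_add_card_filter_lt_erase {α : Type*} [LinearOrder α]
    {t : Finset α} {j k : α} (hj : j ∉ t) (hk : k ∈ t) :
    (t.filter (· < k)).card + ((t.erase k).filter (· < j)).card + 1 =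
      (t.filter (· < j)).card + ((insert j t).filter (· < k)).card := by
  have hkj : k ≠ j := fun h => hj (h ▸ hk)
  rw [Finset.filter_erase, Finset.filter_insert]
  rcases hkj.lt_or_gt with hlt | hgt
  · have hmem : k ∈ t.filter (· < j) := Finset.mem_filter.2 ⟨hk, hlt⟩
    rw [if_neg hlt.not_gt, ← Finset.card_erase_add_one hmem]
    omega
  · have hnotmem : k ∉ t.filter (· < j) := fun h => (Finset.mem_filter.1 h).2.not_gt hgt
    rw [if_pos hgt, Finset.erase_eq_of_notMem hnotmem,
      Finset.card_insert_of_notMem fun h => hj (Finset.mem_filter.1 h).1]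
    omega

theorem Finset.card_insert_erase_of_notMem {α : Type*} [DecidableEq α] {t : Finset α} {j k : α}
    (hj : j ∉ t) (hk : k ∈ t) : (insert j (t.erase k)).card = t.card := by
  rw [Finset.card_insert_of_notMem fun h => hj (Finset.mem_of_mem_erase h),
    Finset.card_erase_add_one hk]

theorem neg_one_pow_zsmul (S : Type*) [Ring S] {V : Type*} [AddCommGroup V] [Module S V]
    (e : ℕ) (v : V) : (-1 : ℤ) ^ e • v = (-1 : S) ^ e • v := by
  rw [← Int.cast_smul_eq_zsmul S]
  push_cast
  rfl

section Cech

variable {M : Type*} [AddCommGroup M] [Module R M]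
variable {ℓ : ℕ} (x : Fin ℓ → R)

theorem cechD_apply {i : ℕ} (c : CechC x M i) (t : Finset (Fin ℓ)) (ht : t.card = i + 1) :
    cechD x M i c ⟨t, ht⟩ = ∑ k ∈ t.attach, ((-1 : ℤ) ^ (t.filter (· < k.1)).card) •
      cechLoc (∏ m ∈ t.erase k.1, x m) (∏ m ∈ t, x m)
        (Finset.prod_dvd_prod_of_subset _ _ _ (Finset.erase_subset _ _))
        (c ⟨t.erase k.1, by rw [Finset.card_erase_of_mem k.2, ht]; rfl⟩) :=
  rfl

theorem cechLoc_apply_congr {i : ℕ} (c : CechC x M i) {s t : Finset (Fin ℓ)} (hst : s = t)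
    (hs : s.card = i) (ht : t.card = i) {r : R} (hsr : (∏ k ∈ s, x k) ∣ r)
    (htr : (∏ k ∈ t, x k) ∣ r) :
    cechLoc _ r hsr (c ⟨s, hs⟩) = cechLoc _ r htr (c ⟨t, ht⟩) := by
  subst hst
  rfl

theorem cechD_eq_zero_at_insert {i : ℕ} {c : CechC x M i} (hc : cechD x M i c = 0)
    {j : Fin ℓ} (t : {t : Finset (Fin ℓ) // t.card = i}) (hj : j ∉ t.1) :
    (-1 : R) ^ (t.1.filter (· < j)).card •
        cechLoc _ (∏ m ∈ insert j t.1, x m)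
          (Finset.prod_dvd_prod_of_subset _ _ _ (Finset.subset_insert _ _)) (c t) +
      ∑ k ∈ t.1.attach, (-1 : R) ^ ((insert j t.1).filter (· < k.1)).card •
        cechLoc _ (∏ m ∈ insert j t.1, x m)
          (Finset.prod_dvd_prod_of_subset _ _ _
            (Finset.insert_subset_insert j (Finset.erase_subset _ _)))
          (c ⟨insert j (t.1.erase k.1), by rw [Finset.card_insert_erase_of_notMem hj k.2, t.2]⟩)
      = 0 := by
  obtain ⟨t, ht⟩ := t
  dsimp only at hj ⊢
  have hT : (insert j t).card = i + 1 := by rw [Finset.card_insert_of_notMem hj, ht]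
  have hcT := congrFun hc ⟨insert j t, hT⟩
  have hj_image : (⟨j, Finset.mem_insert_self j t⟩ : {k // k ∈ insert j t}) ∉
      t.attach.image fun k => ⟨k.1, Finset.mem_insert_of_mem k.2⟩ := by
    simpa using hj
  rw [cechD_apply, Finset.attach_insert, Finset.sum_insert hj_image,
    Finset.sum_image (by intro a _ b _ h; exact Subtype.ext (Subtype.mk.inj h))] at hcT
  rw [Finset.filter_insert, if_neg (lt_irrefl j), cechLoc_apply_congr x c
    (Finset.erase_insert hj) _ ht _
    (Finset.prod_dvd_prod_of_subset _ _ _ (Finset.subset_insert _ _))] at hcT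
  convert hcT using 2
  · rw [neg_one_pow_zsmul R]
  refine Finset.sum_congr rfl fun k _ => ?_
  have hjk : j ≠ k.1 := fun h => hj (h ▸ k.2)
  rw [cechLoc_apply_congr x c (Finset.erase_insert_of_ne hjk).symm, neg_one_pow_zsmul R]
  rfl

end Cech

section CechContract

variable {M : Type*} [AddCommGroup M] [Module R M]
variable {ℓ : ℕ} (x : Fin ℓ → R)

def IsCechLift (j : Fin ℓ) (N : ℕ) {i : ℕ} (c : CechC x M (i + 1)) (p : CechC x M i) : Prop :=
  ∀ (s : {s : Finset (Fin ℓ) // s.card = i}) (t : {t : Finset (Fin ℓ) // t.card = i + 1})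
    (hst : s.1 ⊆ t.1), j ∉ s.1 → j ∈ t.1 →
      cechLoc _ _ (Finset.prod_dvd_prod_of_subset _ _ _ hst) (p s) = x j ^ N • c t

/-- The contracting homotopy of the Čech complex localized at `x j`, with the powers of `x j`
cleared into the lift `p`. -/
def cechContract (j : Fin ℓ) {i : ℕ} (p : CechC x M i) : CechC x M i :=
  fun s => if j ∈ s.1 then 0 else (-1 : ℤ) ^ (s.1.filter (· < j)).card • p s

variable {x}

theorem exists_isCechLift (j : Fin ℓ) {i : ℕ} (c : CechC x M (i + 1)) :
    ∃ N p, IsCechLift x j N c p := by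
  have hcard : ∀ s : {s : Finset (Fin ℓ) // s.card = i}, j ∉ s.1 → (insert j s.1).card = i + 1 :=
    fun s hj => by rw [Finset.card_insert_of_notMem hj, s.2]
  have hlift : ∀ s : {s : Finset (Fin ℓ) // s.card = i}, ∀ᶠ n in Filter.atTop, ∃ z,
      ∀ hj : j ∉ s.1,
        cechLoc _ _ (Finset.prod_dvd_prod_of_subset _ _ _ (Finset.subset_insert j s.1)) z =
          x j ^ n • c ⟨insert j s.1, hcard s hj⟩ := by
    intro s
    by_cases hj : j ∈ s.1
    · exact .of_forall fun _ => ⟨0, fun hj' => absurd hj hj'⟩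
    have hdvd := Finset.prod_dvd_prod_of_subset _ _ x (Finset.subset_insert j s.1)
    have := isLocalizedModuleAway_cechLoc (M := M) (c := x j)
      (by rw [Finset.prod_insert hj, mul_comm]) hdvd
    obtain ⟨n, z, hz⟩ :=
      IsLocalizedModule.Away.surj (cechLoc _ _ hdvd) (x j) (c ⟨insert j s.1, hcard s hj⟩)
    exact (eventually_pow_smul_mem (LinearMap.mem_range.2 ⟨z, hz.symm⟩)).mono
      fun _ ⟨z, hz⟩ => ⟨z, fun _ => hz⟩
  obtain ⟨N, hN⟩ := (Filter.eventually_all.2 hlift).exists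
  choose p hp using hN
  refine ⟨N, p, fun s ⟨t, ht⟩ hst hjs hjt => ?_⟩
  obtain rfl : t = insert j s.1 :=
    (Finset.eq_of_subset_of_card_le (Finset.insert_subset hjt hst)
      (by rw [ht, Finset.card_insert_of_notMem hjs, s.2])).symm
  exact hp s hjs

theorem cechD_cechContract_of_mem {j : Fin ℓ} {N i : ℕ} {c : CechC x M (i + 1)}
    {p : CechC x M i} (hp : IsCechLift x j N c p) (t : {t : Finset (Fin ℓ) // t.card = i + 1})
    (hjt : j ∈ t.1) : cechD x M i (cechContract x j p) t = x j ^ N • c t := by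
  obtain ⟨t, ht⟩ := t
  rw [cechD_apply, Finset.sum_eq_single_of_mem ⟨j, hjt⟩ (Finset.mem_attach _ _)]
  · have hsign : ((t.erase j).filter (· < j)).card = (t.filter (· < j)).card := by
      rw [Finset.filter_erase, Finset.erase_eq_of_notMem (s := t.filter (· < j)) (by simp)]
    dsimp only [cechContract]
    rw [if_neg (Finset.notMem_erase j t), map_zsmul,
      hp ⟨t.erase j, by rw [Finset.card_erase_of_mem hjt, ht]; rfl⟩ ⟨t, ht⟩
        (Finset.erase_subset j t) (Finset.notMem_erase j t) hjt,
      hsign, smul_smul, ← pow_add, Even.neg_one_pow ⟨_, rfl⟩, one_smul]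
  · intro k _ hkj
    dsimp only [cechContract]
    rw [if_pos (Finset.mem_erase.2 ⟨fun h => hkj (Subtype.ext h.symm), hjt⟩), map_zero,
      zsmul_zero]

theorem cechLoc_cechD_cechContract_of_notMem {j : Fin ℓ} {N i : ℕ} {c : CechC x M (i + 1)}
    (hc : cechD x M (i + 1) c = 0) {p : CechC x M i} (hp : IsCechLift x j N c p)
    (t : {t : Finset (Fin ℓ) // t.card = i + 1}) (hjt : j ∉ t.1) :
    cechLoc _ (∏ m ∈ insert j t.1, x m)
        (Finset.prod_dvd_prod_of_subset _ _ _ (Finset.subset_insert _ _))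
        (cechD x M i (cechContract x j p) t) =
      x j ^ N • cechLoc _ (∏ m ∈ insert j t.1, x m)
        (Finset.prod_dvd_prod_of_subset _ _ _ (Finset.subset_insert _ _)) (c t) := by
  have hcocycle := cechD_eq_zero_at_insert x hc t hjt
  obtain ⟨t, ht⟩ := t
  dsimp only at hjt hcocycle ⊢
  set ε : R := (-1) ^ (t.filter (· < j)).card
  set W := cechLoc _ (∏ m ∈ insert j t, x m)
    (Finset.prod_dvd_prod_of_subset _ _ _ (Finset.subset_insert _ _)) (c ⟨t, ht⟩)
  have hε : ε * ε = 1 := by rw [← pow_add, Even.neg_one_pow ⟨_, rfl⟩]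
  rw [← one_smul R W, ← hε, mul_smul, smul_comm, eq_neg_of_add_eq_zero_left hcocycle,
    smul_neg, smul_neg, Finset.smul_sum, Finset.smul_sum, ← Finset.sum_neg_distrib, cechD_apply,
    map_sum]
  refine Finset.sum_congr rfl fun k _ => ?_
  have hjk : j ∉ t.erase k.1 := fun h => hjt (Finset.mem_of_mem_erase h)
  dsimp only [cechContract]
  rw [if_neg hjk, map_zsmul, map_zsmul, neg_one_pow_zsmul R, neg_one_pow_zsmul R]
  have hkj : (t.erase k.1).card = i := by rw [Finset.card_erase_of_mem k.2, ht]; rfl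
  rw [map_smul, cechLoc_cechLoc, ← cechLoc_cechLoc (b := ∏ m ∈ insert j (t.erase k.1), x m)
    (Finset.prod_dvd_prod_of_subset _ _ _ (Finset.subset_insert _ _))
    (Finset.prod_dvd_prod_of_subset _ _ _
      (Finset.insert_subset_insert j (Finset.erase_subset _ _))),
    hp ⟨t.erase k.1, hkj⟩ ⟨insert j (t.erase k.1), by rw [Finset.card_insert_of_notMem hjk, hkj]⟩
      (Finset.subset_insert _ _) hjk (Finset.mem_insert_self _ _), map_smul]
  simp only [smul_smul, ← neg_smul]
  congr 1
  have hsign :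
      (-1 : R) ^ (t.filter (· < k.1)).card * (-1) ^ ((t.erase k.1).filter (· < j)).card =
        -(ε * (-1) ^ ((insert j t).filter (· < k.1)).card) := by
    rw [← pow_add, ← pow_add, ← Finset.card_filter_lt_add_card_filter_lt_erase hjt k.2, pow_succ]
    ring
  linear_combination x j ^ N * hsign

end CechContract

section CechTorsion

variable {M : Type*} [AddCommGroup M] [Module R M]
variable {ℓ : ℕ} {x : Fin ℓ → R}

theorem exists_pow_smul_eq_zero_of_cechD_zero_eq_zero (j : Fin ℓ) {c : CechC x M 0}
    (hc : cechD x M 0 c = 0) : ∃ n : ℕ, x j ^ n • c = 0 := by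
  refine exists_pow_smul_eq_zero_pi fun t => ?_
  have ht : t.1 = ∅ := Finset.card_eq_zero.1 t.2
  have hjt : j ∉ t.1 := by simp [ht]
  have hcocycle := cechD_eq_zero_at_insert x hc t hjt
  rw [Finset.sum_eq_zero fun k _ => absurd k.2 (by simp [ht]), add_zero,
    ((isUnit_neg_one (α := R)).pow _).smul_eq_zero] at hcocycle
  exact eventually_pow_smul_eq_zero_of_cechLoc_eq_zero (b := ∏ m ∈ insert j t.1, x m)
    (by rw [Finset.prod_insert hjt, mul_comm]) _ hcocycle

theorem exists_pow_smul_mem_range_cechD (j : Fin ℓ) {i : ℕ} {c : CechC x M (i + 1)}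
    (hc : cechD x M (i + 1) c = 0) : ∃ n : ℕ, x j ^ n • c ∈ LinearMap.range (cechD x M i) := by
  obtain ⟨N, p, hp⟩ := exists_isCechLift j c
  obtain ⟨n, hn⟩ :
      ∃ n : ℕ, x j ^ n • (cechD x M i (cechContract x j p) - x j ^ N • c) = 0 := by
    refine exists_pow_smul_eq_zero_pi fun t => ?_
    by_cases hjt : j ∈ t.1
    · exact .of_forall fun _ => by
        rw [Pi.sub_apply, Pi.smul_apply, cechD_cechContract_of_mem hp t hjt, sub_self,
          smul_zero]
    · exact eventually_pow_smul_eq_zero_of_cechLoc_eq_zero (b := ∏ m ∈ insert j t.1, x m)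
        (by rw [Finset.prod_insert hjt, mul_comm]) _ (by
          rw [Pi.sub_apply, Pi.smul_apply, map_sub, map_smul,
            cechLoc_cechD_cechContract_of_notMem hc hp t hjt, sub_self])
  refine ⟨n + N, x j ^ n • cechContract x j p, ?_⟩
  rw [smul_sub, sub_eq_zero, smul_smul, ← pow_add] at hn
  rw [map_smul, hn]

theorem exists_pow_smul_mem_cechPrevRange (j : Fin ℓ) {i : ℕ} {c : CechC x M i}
    (hc : cechD x M i c = 0) : ∃ n : ℕ, x j ^ n • c ∈ cechPrevRange x M i := by
  cases i with
  | zero =>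
    obtain ⟨n, hn⟩ := exists_pow_smul_eq_zero_of_cechD_zero_eq_zero j hc
    exact ⟨n, (Submodule.mem_bot R).2 hn⟩
  | succ i => exact exists_pow_smul_mem_range_cechD j hc

theorem CechH.exists_pow_smul_eq_zero (j : Fin ℓ) {i : ℕ} (h : CechH x M i) :
    ∃ n : ℕ, x j ^ n • h = 0 := by
  obtain ⟨c, rfl⟩ := Submodule.Quotient.mk_surjective _ h
  obtain ⟨n, hn⟩ := exists_pow_smul_mem_cechPrevRange j c.2
  exact ⟨n, by rwa [← Submodule.Quotient.mk_smul, Submodule.Quotient.mk_eq_zero]⟩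

end CechTorsion

theorem stmt_5_general {R : Type*} [CommRing R] {ℓ : ℕ} (x : Fin ℓ → R)
    (M : Type*) [AddCommGroup M] [Module R M]
    (u : R) (hu : u ∈ Ideal.span (Set.range x))
    (i : ℕ) (hinj : Function.Injective (fun h : CechH x M i => u • h)) :
    Subsingleton (CechH x M i) := by
  refine subsingleton_of_forall_eq 0 fun h => ?_
  obtain ⟨n, hn⟩ := exists_pow_smul_eq_zero_of_mem_span
    (Set.forall_mem_range.2 fun j => CechH.exists_pow_smul_eq_zero j h) hu
  exact eq_zero_of_pow_smul_eq_zero hinj hn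

/-- If `u ∈ (x)R` is a non-zero-divisor on `M` and multiplication by `u` is injective on the
Čech cohomology `H^i_x(M)`, then `H^i_x(M) = 0`. -/
theorem stmt_5 {R : Type*} [CommRing R] {ℓ : ℕ} (x : Fin ℓ → R)
    (M : Type*) [AddCommGroup M] [Module R M]
    (u : R) (hu : u ∈ Ideal.span (Set.range x)) (hreg : ∀ m : M, u • m = 0 → m = 0)
    (i : ℕ) (hinj : Function.Injective (fun h : CechH x M i => u • h)) :
    Subsingleton (CechH x M i) :=
  stmt_5_general x M u hu i hinj

end
end

section
/- Let V be a valuation domain of Krull dimension 2 with maximal ideal m, and let P be the unique prime ideal strictly between (0) and m. Let x ∈ P be nonzero and y ∈ m \ P. Then the sequence x, y is weakly proregular on V: for all n ≥ 1, the map on first Koszul homology H_1(x^{2n}, y^{2n}; V) → H_1(x^n, y^n; V) induced by the standard transition chain map is zero. -/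
/-!
Divisibility in a valuation ring is total, so `x ∈ P` and `y ∉ P` force `y ∣ x`. Writing
`x^n = c y^n`, the relation `r x^{2n} + s y^{2n} = 0` reads `y^n (s y^n + r c x^n) = 0`, and
cancelling `y^n` exhibits `(r x^n, s y^n)` as the boundary `r c · (y^n, -x^n)`.
-/

theorem ValuationRing.dvd_of_mem_of_notMem {R : Type*} [CommSemiring R] [PreValuationRing R]
    {I : Ideal R} {x y : R} (hx : x ∈ I) (hy : y ∉ I) : y ∣ x :=
  (ValuationRing.dvd_total x y).resolve_left fun hxy => hy (I.mem_of_dvd hxy hx)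

theorem exists_koszul_boundary_of_dvd {R : Type*} [CommRing R] {u v r s : R}
    (hv : IsLeftRegular v) (hvu : v ∣ u) (hrel : r * u ^ 2 + s * v ^ 2 = 0) :
    ∃ a : R, r * u = a * v ∧ s * v = a * (-u) := by
  obtain ⟨c, rfl⟩ := hvu
  refine ⟨r * c, by ring, hv ?_⟩
  linear_combination hrel

theorem stmt_6_general {V : Type*} [CommRing V] [IsDomain V] [ValuationRing V]
    (P : Ideal V)
    (x y : V) (hx : x ∈ P) (hyP : y ∉ P) :
    ∀ n : ℕ, 1 ≤ n → ∀ r s : V, r * x ^ (2 * n) + s * y ^ (2 * n) = 0 →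
      ∃ a : V, r * x ^ n = a * y ^ n ∧ s * y ^ n = a * (-(x ^ n)) := by
  intro n _ r s hrel
  have hy0 : y ≠ 0 := fun h => hyP (h ▸ P.zero_mem)
  refine exists_koszul_boundary_of_dvd ((IsRegular.of_ne_zero hy0).left.pow n)
    (pow_dvd_pow_of_dvd (ValuationRing.dvd_of_mem_of_notMem hx hyP) n) ?_
  rwa [← pow_mul, ← pow_mul, mul_comm n 2]

/-- Let `V` be a valuation domain of Krull dimension `2` with maximal ideal `m`, `P` the prime
strictly between `(0)` and `m`, `x ∈ P` nonzero, and `y ∈ m \ P`.  Then `x, y` is weakly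
proregular: for each `n ≥ 1` the transition map on first Koszul homology
`H_1(x^{2n}, y^{2n}; V) → H_1(x^n, y^n; V)`, sending the class of a relation `(r, s)` with
`r x^{2n} + s y^{2n} = 0` to the class of `(r x^n, s y^n)`, is zero; i.e. `(r x^n, s y^n)`
lies in the submodule of boundaries `V·(y^n, -x^n)`. -/
theorem stmt_6 {V : Type*} [CommRing V] [IsDomain V] [ValuationRing V]
    (h2 : ringKrullDim V = 2) (P : Ideal V) [P.IsPrime] (hP0 : ⊥ < P)
    (hPm : P < IsLocalRing.maximalIdeal V)
    (x y : V) (hx : x ∈ P) (hx0 : x ≠ 0)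
    (hy : y ∈ IsLocalRing.maximalIdeal V) (hyP : y ∉ P) :
    ∀ n : ℕ, 1 ≤ n → ∀ r s : V, r * x ^ (2 * n) + s * y ^ (2 * n) = 0 →
      ∃ a : V, r * x ^ n = a * y ^ n ∧ s * y ^ n = a * (-(x ^ n)) :=
  stmt_6_general P x y hx hyP
end

section
/- Let f : R → S be a faithfully flat homomorphism of commutative rings and x = x_1, ..., x_ℓ a finite sequence in R. Then x is weakly proregular on R if and only if f(x) is weakly proregular on S. -/
open scoped BigOperators
open Classical

noncomputable section

variable {R : Type*} [CommRing R]

/-- Degree `i` term of the Koszul complex on `ℓ` elements: free module indexed by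
`i`-element subsets of the index set. -/
abbrev KoszulC (R : Type*) [CommRing R] (ℓ i : ℕ) : Type _ :=
  {t : Finset (Fin ℓ) // t.card = i} → R

/-- The Koszul differential `K_{i+1} → K_i` for the sequence `x^k = x_1^k, ..., x_ℓ^k`. -/
noncomputable def koszulD {ℓ : ℕ} (x : Fin ℓ → R) (k : ℕ) (i : ℕ) :
    KoszulC R ℓ (i + 1) →ₗ[R] KoszulC R ℓ i where
  toFun m s := ∑ j ∈ (s.1ᶜ).attach,
    ((-1 : ℤ) ^ ((s.1.filter (· < j.1)).card)) •
      ((x j.1 ^ k) * m ⟨insert j.1 s.1, by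
        rw [Finset.card_insert_of_notMem (Finset.mem_compl.mp j.2), s.2]⟩)
  map_add' := by
    intro a b
    funext s
    simp [mul_add, smul_add, Finset.sum_add_distrib]
  map_smul' := by
    intro r a
    funext s
    simp [Finset.mul_sum, mul_smul_comm, mul_left_comm]
  
/-- The standard transition chain map `K(x^m) → K(x^n)` (for `n ≤ m`) in degree `i`:
multiplication on the component indexed by `t` by `∏_{j ∈ t} x_j^{m-n}`. -/
noncomputable def koszulTr {ℓ : ℕ} (x : Fin ℓ → R) (m n i : ℕ) :
    KoszulC R ℓ i →ₗ[R] KoszulC R ℓ i where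
  toFun z t := (∏ j ∈ t.1, x j ^ (m - n)) * z t
  map_add' := by intro a b; funext t; simp [mul_add]
  map_smul' := by intro r a; funext t; simp; ring

/-- A finite sequence `x` is weakly proregular if for each `n` there is `m ≥ n` such that
the transition maps `H_i(x^m; R) → H_i(x^n; R)` on Koszul homology vanish for all `i ≥ 1`;
equivalently, the transition image of every cycle is a boundary. -/
def WeaklyProregular {ℓ : ℕ} (x : Fin ℓ → R) : Prop :=
  ∀ n : ℕ, 1 ≤ n → ∃ m, n ≤ m ∧ ∀ i : ℕ, ∀ z : KoszulC R ℓ (i + 1),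
    koszulD x m i z = 0 →
      ∃ b : KoszulC R ℓ (i + 1 + 1), koszulD x n (i + 1) b = koszulTr x m n (i + 1) z


/-!
In degree `i ≥ 1`, the condition in `WeaklyProregular` says `ker d_m ≤ t⁻¹(im d_n)` for the
Koszul differentials `d` and the transition map `t`. Via `S ⊗[R] R^I ≅ S^I` the Koszul complexes
and transition maps over `S` are the base changes of those over `R`. Flatness preserves kernels,
so the inclusion ascends to `S`. Conversely, if `1 ⊗ t z` lies in the image of `S ⊗ d_n`, then by
right exactness `1 ⊗ t z` vanishes in `S ⊗ coker d_n`, so `t z ∈ im d_n` by faithful flatness.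
-/

open TensorProduct LinearMap

theorem ker_le_comap_range_iff_of_comm {M N P M₁ N₁ P₁ : Type*}
    [AddCommGroup M] [Module R M] [AddCommGroup N] [Module R N] [AddCommGroup P] [Module R P]
    [AddCommGroup M₁] [Module R M₁] [AddCommGroup N₁] [Module R N₁]
    [AddCommGroup P₁] [Module R P₁]
    (eM : M ≃ₗ[R] M₁) (eN : N ≃ₗ[R] N₁) (eP : P ≃ₗ[R] P₁)
    {d : M →ₗ[R] N} {t : M →ₗ[R] M} {d' : P →ₗ[R] M}
    {D : M₁ →ₗ[R] N₁} {T : M₁ →ₗ[R] M₁} {D' : P₁ →ₗ[R] M₁}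
    (hd : ∀ m, D (eM m) = eN (d m)) (ht : ∀ m, T (eM m) = eM (t m))
    (hd' : ∀ p, D' (eP p) = eM (d' p)) :
    ker D ≤ (range D').comap T ↔ ker d ≤ (range d').comap t := by
  constructor
  · intro h m hm
    obtain ⟨B, hB⟩ := h (show eM m ∈ ker D by simp [mem_ker.mp hm, hd])
    obtain ⟨p, rfl⟩ := eP.surjective B
    exact ⟨p, eM.injective (by rw [← hd', hB, ht])⟩
  · intro h z hz
    obtain ⟨m, rfl⟩ := eM.surjective z
    obtain ⟨p, hp⟩ := h (show m ∈ ker d by simpa [hd] using hz)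
    exact ⟨eP p, by rw [hd', hp, ht]⟩

section BaseChange

variable {S : Type*} [CommRing S] [Algebra R S]
  {M N P : Type*} [AddCommGroup M] [Module R M] [AddCommGroup N] [Module R N]
  [AddCommGroup P] [Module R P]

theorem Module.Flat.ker_baseChange_le_comap_range_baseChange [Module.Flat R S]
    {d : M →ₗ[R] N} {t : M →ₗ[R] M} {d' : P →ₗ[R] M} (h : ker d ≤ (range d').comap t) :
    ker (d.baseChange S) ≤ (range (d'.baseChange S)).comap (t.baseChange S) := by
  intro w hw
  have hexact := Module.Flat.lTensor_exact S (exact_subtype_ker_map d)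
  obtain ⟨v, rfl⟩ := (hexact w).mp (by simpa [baseChange_eq_ltensor] using hw)
  clear hw
  induction v using TensorProduct.induction_on with
  | zero => simp
  | tmul s z =>
    obtain ⟨b, hb⟩ := h z.2
    exact ⟨s ⊗ₜ b, by simp [hb]⟩
  | add v₁ v₂ h₁ h₂ => simpa using add_mem h₁ h₂

theorem Module.FaithfullyFlat.mem_range_of_one_tmul_mem_range_baseChange
    [Module.FaithfullyFlat R S] {d' : P →ₗ[R] M} {y : M}
    (hy : (1 : S) ⊗ₜ[R] y ∈ range (d'.baseChange S)) : y ∈ range d' := by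
  have hexact := lTensor_exact S (exact_map_mkQ_range d') (range d').mkQ_surjective
  rw [← Submodule.ker_mkQ (range d'), mem_ker,
    ← one_tmul_eq_zero_iff R _ (A := S), ← lTensor_tmul, hexact]
  simpa [baseChange_eq_ltensor] using hy

theorem Module.FaithfullyFlat.ker_baseChange_le_comap_range_baseChange_iff
    [Module.FaithfullyFlat R S] {d : M →ₗ[R] N} {t : M →ₗ[R] M} {d' : P →ₗ[R] M} :
    ker (d.baseChange S) ≤ (range (d'.baseChange S)).comap (t.baseChange S) ↔
      ker d ≤ (range d').comap t := by
  refine ⟨fun h m hm => ?_, Module.Flat.ker_baseChange_le_comap_range_baseChange⟩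
  apply mem_range_of_one_tmul_mem_range_baseChange (S := S)
  simpa using h (show (1 : S) ⊗ₜ[R] m ∈ ker (d.baseChange S) by simp [mem_ker.mp hm])

theorem TensorProduct.piScalarRight_tmul_eq_smul {ι : Type*} [Fintype ι] [DecidableEq ι]
    (s : S) (z : ι → R) :
    piScalarRight R S S ι (s ⊗ₜ z) = s • fun j => algebraMap R S (z j) := by
  ext j
  simp only [piScalarRight_apply, piScalarRightHom_tmul, Pi.smul_apply, smul_eq_mul]
  rw [_root_.Algebra.smul_def, mul_comm]

theorem TensorProduct.apply_piScalarRight_eq_piScalarRight_baseChange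
    {ι κ : Type*} [Fintype ι] [DecidableEq ι] [Fintype κ] [DecidableEq κ]
    (φ : (ι → R) →ₗ[R] (κ → R)) (Φ : (ι → S) →ₗ[S] (κ → S))
    (h : ∀ z, Φ (fun j => algebraMap R S (z j)) = fun j => algebraMap R S (φ z j))
    (w : S ⊗[R] (ι → R)) :
    Φ (piScalarRight R S S ι w) = piScalarRight R S S κ (φ.baseChange S w) := by
  induction w using TensorProduct.induction_on with
  | zero => simp
  | tmul s z =>
    rw [baseChange_tmul, piScalarRight_tmul_eq_smul, piScalarRight_tmul_eq_smul, map_smul, h]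
  | add w₁ w₂ h₁ h₂ => simp only [map_add, h₁, h₂]

end BaseChange

section Koszul

variable {S : Type*} [CommRing S] [Algebra R S] {ℓ : ℕ}

theorem koszulD_algebraMap (x : Fin ℓ → R) (k i : ℕ) (z : KoszulC R ℓ (i + 1)) :
    koszulD (fun j => algebraMap R S (x j)) k i (fun t => algebraMap R S (z t)) =
      fun t => algebraMap R S (koszulD x k i z t) := by
  funext t
  simp only [koszulD, LinearMap.coe_mk, AddHom.coe_mk, map_sum, map_zsmul, map_mul, map_pow]

theorem koszulTr_algebraMap (x : Fin ℓ → R) (m n i : ℕ) (z : KoszulC R ℓ i) :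
    koszulTr (fun j => algebraMap R S (x j)) m n i (fun t => algebraMap R S (z t)) =
      fun t => algebraMap R S (koszulTr x m n i z t) := by
  funext t
  simp only [koszulTr, LinearMap.coe_mk, AddHom.coe_mk, map_mul, map_prod, map_pow]

theorem weaklyProregular_iff (x : Fin ℓ → R) :
    WeaklyProregular x ↔ ∀ n : ℕ, 1 ≤ n → ∃ m, n ≤ m ∧ ∀ i : ℕ,
      ker (koszulD x m i) ≤ (range (koszulD x n (i + 1))).comap (koszulTr x m n (i + 1)) :=
  Iff.rfl

theorem ker_koszulD_le_comap_range_algebraMap_iff [Module.FaithfullyFlat R S]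
    (x : Fin ℓ → R) (m n i : ℕ) :
    ker (koszulD (fun j => algebraMap R S (x j)) m i) ≤
        (range (koszulD (fun j => algebraMap R S (x j)) n (i + 1))).comap
          (koszulTr (fun j => algebraMap R S (x j)) m n (i + 1)) ↔
      ker (koszulD x m i) ≤ (range (koszulD x n (i + 1))).comap (koszulTr x m n (i + 1)) := by
  refine (ker_le_comap_range_iff_of_comm (piScalarRight R S S _) (piScalarRight R S S _)
    (piScalarRight R S S _)
    (apply_piScalarRight_eq_piScalarRight_baseChange _ _ (koszulD_algebraMap x m i))
    (apply_piScalarRight_eq_piScalarRight_baseChange _ _ (koszulTr_algebraMap x m n (i + 1)))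
    (apply_piScalarRight_eq_piScalarRight_baseChange _ _ (koszulD_algebraMap x n (i + 1)))).trans
    Module.FaithfullyFlat.ker_baseChange_le_comap_range_baseChange_iff

end Koszul

/-- Weak proregularity ascends and descends along a faithfully flat ring map: for a
faithfully flat `R`-algebra `S` and a finite sequence `x` in `R`, `x` is weakly proregular
on `R` iff its image in `S` is weakly proregular on `S`. -/
theorem stmt_11 {R : Type*} [CommRing R] {S : Type*} [CommRing S] [Algebra R S]
    [Module.FaithfullyFlat R S] {ℓ : ℕ} (x : Fin ℓ → R) :
    WeaklyProregular x ↔ WeaklyProregular (fun i => algebraMap R S (x i)) := by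
  simp only [weaklyProregular_iff, ker_koszulD_le_comap_range_algebraMap_iff]
end
end

section
/- Let R ⊆ S be commutative rings with R quasi-local with maximal ideal m, S a finite R-module, and ρ : S → R an R-module retraction (ρ(r) = r for all r ∈ R). Then there exists a maximal ideal q of S such that for every x ∈ S \ q, ρ(xS) = R. -/
/-!
Let `I` be the largest ideal of `S` inside the `R`-submodule `ρ⁻¹(m)`, i.e. the set of `x` with
`ρ(xS) ⊆ m`. Since `ρ 1 = 1 ∉ m`, `I` is proper, so it lies in a maximal ideal `q`. For `x ∉ q`
some `ρ(xs)` lies outside `m`, hence is a unit of the local ring `R`, and so `ρ(xS) = R`.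
-/

namespace Submodule

variable {R S : Type*} [CommSemiring R] [CommSemiring S] [Algebra R S]

/-- The largest ideal of `S` contained in the `R`-submodule `p`. -/
def idealCore (p : Submodule R S) : Ideal S where
  carrier := {x | ∀ s, x * s ∈ p}
  add_mem' ha hb s := by simpa only [add_mul] using p.add_mem (ha s) (hb s)
  zero_mem' s := by simpa only [zero_mul] using p.zero_mem
  smul_mem' c x hx s := by simpa only [smul_eq_mul, mul_left_comm c, mul_assoc] using hx (c * s)

theorem mem_idealCore {p : Submodule R S} {x : S} : x ∈ p.idealCore ↔ ∀ s, x * s ∈ p :=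
  Iff.rfl

theorem idealCore_ne_top {p : Submodule R S} (h : (1 : S) ∉ p) : p.idealCore ≠ ⊤ := fun htop =>
  h (by simpa only [one_mul] using mem_idealCore.mp (htop ▸ Submodule.mem_top : (1 : S) ∈ _) 1)

end Submodule

theorem LinearMap.map_span_singleton_eq_top_of_isUnit {R S : Type*} [CommSemiring R]
    [CommSemiring S] [Algebra R S] (ρ : S →ₗ[R] R) {x s : S} (h : IsUnit (ρ (x * s))) :
    Submodule.map ρ ((Ideal.span {x}).restrictScalars R) = ⊤ :=
  Ideal.eq_top_of_isUnit_mem _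
    (Submodule.mem_map_of_mem (Ideal.mul_mem_right s _ (Ideal.mem_span_singleton_self x))) h

theorem stmt_15_general {R S : Type*} [CommRing R] [CommRing S] [Algebra R S] [IsLocalRing R]
    (ρ : S →ₗ[R] R) (hρ : ∀ r : R, ρ (algebraMap R S r) = r) :
    ∃ q : Ideal S, q.IsMaximal ∧
      ∀ x : S, x ∉ q → Submodule.map ρ ((Ideal.span {x}).restrictScalars R) = ⊤ := by
  set I := (Submodule.comap ρ (IsLocalRing.maximalIdeal R)).idealCore
  have hρ₁ : ρ 1 = 1 := by simpa only [map_one] using hρ 1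
  have hI : I ≠ ⊤ := Submodule.idealCore_ne_top fun h =>
    IsLocalRing.notMem_maximalIdeal.mpr isUnit_one (hρ₁ ▸ Submodule.mem_comap.mp h)
  obtain ⟨q, hq, hIq⟩ := Ideal.exists_le_maximal I hI
  refine ⟨q, hq, fun x hx => ?_⟩
  obtain ⟨s, hs⟩ : ∃ s, ρ (x * s) ∉ IsLocalRing.maximalIdeal R := by
    simpa only [I, Submodule.mem_idealCore, Submodule.mem_comap, not_forall] using mt (@hIq x) hx
  exact ρ.map_span_singleton_eq_top_of_isUnit (IsLocalRing.notMem_maximalIdeal.mp hs)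

/-- Let `R ⊆ S` be commutative rings with `R` quasi-local, `S` finite as an `R`-module, and
`ρ : S → R` an `R`-module retraction. Then there is a maximal ideal `q` of `S` such that
`ρ(xS) = R` for every `x ∈ S \ q`. -/
theorem stmt_15 {R S : Type*} [CommRing R] [CommRing S] [Algebra R S] [IsLocalRing R]
    [Module.Finite R S] (hinj : Function.Injective (algebraMap R S))
    (ρ : S →ₗ[R] R) (hρ : ∀ r : R, ρ (algebraMap R S r) = r) :
    ∃ q : Ideal S, q.IsMaximal ∧
      ∀ x : S, x ∉ q → Submodule.map ρ ((Ideal.span {x}).restrictScalars R) = ⊤ :=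
  stmt_15_general ρ hρ
end

section
/- Let R ⊆ S be commutative rings, ρ : S → R an R-module retraction, M an R-module, and q a maximal ideal of S with the property that ρ(xS) = R for every x ∈ S \ q. If S_q ⊗_R M = 0 then M = 0. -/
/-!
If `S_q ⊗_R M = 0`, then for each `m` the element `1 ⊗ m` of `S ⊗_R M` dies in the localization
`S_q ⊗_S (S ⊗_R M)`, so `x ⊗ m = 0` for some `x ∉ q`. Choosing `c` with `ρ (c x) = 1` and applying
`ρ ⊗ id` to `(c x) ⊗ m = 0` gives `m = ρ (c x) • m = 0`.
-/

open TensorProduct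

theorem Ideal.exists_notMem_smul_eq_zero_of_subsingleton_tensor {S N : Type*} [CommRing S]
    [AddCommGroup N] [Module S N] (p : Ideal S) [p.IsPrime]
    [Subsingleton (Localization.AtPrime p ⊗[S] N)] (n : N) : ∃ s ∉ p, s • n = 0 := by
  have : IsLocalizedModule p.primeCompl (TensorProduct.mk S (Localization.AtPrime p) N 1) :=
    (isLocalizedModule_iff_isBaseChange p.primeCompl (Localization.AtPrime p) _).mpr
      (TensorProduct.isBaseChange S N (Localization.AtPrime p))
  obtain ⟨s, hs⟩ := (IsLocalizedModule.eq_zero_iff p.primeCompl _).mp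
    (Subsingleton.elim (TensorProduct.mk S (Localization.AtPrime p) N 1 n) 0)
  exact ⟨s, s.2, hs⟩

theorem LinearMap.smul_eq_zero_of_tmul_eq_zero {R S M : Type*} [CommRing R] [CommRing S]
    [Algebra R S] [AddCommGroup M] [Module R M] (ρ : S →ₗ[R] R) {x : S} {m : M}
    (hxm : x ⊗ₜ[R] m = 0) {y : S} (hy : y ∈ Ideal.span {x}) : ρ y • m = 0 := by
  obtain ⟨c, rfl⟩ := Ideal.mem_span_singleton'.mp hy
  have hcxm : (c * x) ⊗ₜ[R] m = 0 := by
    rw [← smul_eq_mul, ← TensorProduct.smul_tmul', hxm, smul_zero]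
  simpa using congrArg ((TensorProduct.lid R M).toLinearMap ∘ₗ LinearMap.rTensor M ρ) hcxm

theorem stmt_16_general {R S : Type*} [CommRing R] [CommRing S] [Algebra R S]
    (ρ : S →ₗ[R] R)
    (q : Ideal S) [q.IsMaximal]
    (hq : ∀ x : S, x ∉ q → Submodule.map ρ ((Ideal.span {x}).restrictScalars R) = ⊤)
    (M : Type*) [AddCommGroup M] [Module R M]
    (h : Subsingleton (TensorProduct R (Localization.AtPrime q) M)) :
    Subsingleton M := by
  have : Subsingleton (Localization.AtPrime q ⊗[S] (S ⊗[R] M)) :=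
    (AlgebraTensorModule.cancelBaseChange R S (Localization.AtPrime q)
      (Localization.AtPrime q) M).toEquiv.subsingleton
  refine subsingleton_of_forall_eq 0 fun m => ?_
  obtain ⟨x, hxq, hxm⟩ := q.exists_notMem_smul_eq_zero_of_subsingleton_tensor ((1 : S) ⊗ₜ[R] m)
  rw [smul_tmul', smul_eq_mul, mul_one] at hxm
  obtain ⟨y, hy, hρy⟩ : (1 : R) ∈ Submodule.map ρ ((Ideal.span {x}).restrictScalars R) := by
    rw [hq x hxq]; trivial
  simpa [hρy] using ρ.smul_eq_zero_of_tmul_eq_zero hxm hy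

/-- Let `R ⊆ S` be commutative rings, `ρ : S → R` an `R`-module retraction, `M` an `R`-module,
and `q` a maximal ideal of `S` such that `ρ(xS) = R` for every `x ∈ S \ q`.
If `S_q ⊗_R M = 0` then `M = 0`. -/
theorem stmt_16 {R S : Type*} [CommRing R] [CommRing S] [Algebra R S]
    (hinj : Function.Injective (algebraMap R S))
    (ρ : S →ₗ[R] R) (hρ : ∀ r : R, ρ (algebraMap R S r) = r)
    (q : Ideal S) [q.IsMaximal]
    (hq : ∀ x : S, x ∉ q → Submodule.map ρ ((Ideal.span {x}).restrictScalars R) = ⊤)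
    (M : Type*) [AddCommGroup M] [Module R M]
    (h : Subsingleton (TensorProduct R (Localization.AtPrime q) M)) :
    Subsingleton M :=
  stmt_16_general ρ q hq M h
end

section
/- Let R ⊆ S be commutative rings, ρ : S → R an R-module retraction, q a maximal ideal of S with ρ(xS) = R for all x ∈ S \ q, and M an R-module. If a sequence x of elements of R is a regular sequence on S_q ⊗_R M, then x is a regular sequence on M. -/
/-!
Purity: for every `R`-module `M` the map `m ↦ 1 ⊗ m` into `S_q ⊗_R M` is injective. Indeed, if
`1 ⊗ m = 0` then `x ⊗ m = 0` in `S ⊗_R M` for some `x ∉ q`; choosing `c` with `ρ (c x) = 1` and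
applying `ρ (c · -) ⊗ id` gives `m = 0`. Since `S_q ⊗_R -` commutes with the quotients
`N ↦ N / aN`, purity lets each non-zero-divisor condition descend from `S_q ⊗_R M` to `M`, and
`(x)M = M` would force `(x)(S_q ⊗_R M) = S_q ⊗_R M`.
-/

open TensorProduct

universe u

variable {R : Type u} [CommRing R]

/-- `PossiblyImproperRegular R l N` means the list `l` is a possibly improper regular
sequence on the `R`-module `N`: each entry is a non-zero-divisor modulo the previous ones. -/
def PossiblyImproperRegular (R : Type u) [CommRing R] :
    List R → (N : Type u) → [inst : AddCommGroup N] → [inst2 : Module R N] → Prop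
  | [], _, _, _ => True
  | a :: as, N, _, _ => (∀ m : N, a • m = 0 → m = 0) ∧
      PossiblyImproperRegular R as (N ⧸ (Ideal.span {a} • (⊤ : Submodule R N)))

/-- `IsRegularSeqOn R l N`: the list `l` is a regular sequence on `N`, i.e. a possibly
improper regular sequence with `(l)N ≠ N`. -/
def IsRegularSeqOn (R : Type u) [CommRing R] (l : List R) (N : Type u) [AddCommGroup N]
    [Module R N] : Prop :=
  PossiblyImproperRegular R l N ∧ (Ideal.span {a | a ∈ l}) • (⊤ : Submodule R N) ≠ ⊤

namespace PossiblyImproperRegular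

theorem of_linearEquiv : ∀ {l : List R} {N N' : Type u} [AddCommGroup N] [Module R N]
    [AddCommGroup N'] [Module R N'], (N ≃ₗ[R] N') →
    PossiblyImproperRegular R l N → PossiblyImproperRegular R l N'
  | [], _, _, _, _, _, _, _, _ => trivial
  | a :: _, _, _, _, _, _, _, e, ⟨hreg, hquot⟩ => by
    refine ⟨fun m hm => e.symm.injective ?_,
      of_linearEquiv (Submodule.Quotient.equiv _ _ e ?_) hquot⟩
    · rw [map_zero]
      exact hreg _ (by rw [← map_smul, hm, map_zero])
    · rw [Submodule.map_smul'', Submodule.map_top, LinearEquiv.range]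

end PossiblyImproperRegular

noncomputable def tensorQuotSpanSMulTopEquiv (A N : Type u) [AddCommGroup A] [Module R A]
    [AddCommGroup N] [Module R N] (a : R) :
    ((A ⊗[R] N) ⧸ Ideal.span {a} • (⊤ : Submodule R (A ⊗[R] N))) ≃ₗ[R]
      A ⊗[R] (N ⧸ Ideal.span {a} • (⊤ : Submodule R N)) :=
  Submodule.quotEquivOfEq _ _ (Submodule.ideal_span_singleton_smul a ⊤) ≪≫ₗ
    (QuotSMulTop.tensorQuotSMulTopEquivQuotSMulTop a A N).symm ≪≫ₗ
      (Submodule.quotEquivOfEq _ _ (Submodule.ideal_span_singleton_smul a ⊤).symm).lTensor A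

theorem Submodule.smul_top_tensor_eq_top (A : Type u) [AddCommGroup A] [Module R A]
    {M : Type u} [AddCommGroup M] [Module R M] {I : Ideal R}
    (h : I • (⊤ : Submodule R M) = ⊤) : I • (⊤ : Submodule R (A ⊗[R] M)) = ⊤ := by
  refine eq_top_iff.mpr ((span_tmul_eq_top R A M).ge.trans (span_le.mpr ?_))
  rintro _ ⟨a, m, rfl⟩
  have hm : TensorProduct.mk R A M a m ∈
      I • (⊤ : Submodule R M).map (TensorProduct.mk R A M a) := by
    rw [← map_smul'', h]
    exact mem_map_of_mem mem_top
  exact smul_mono le_rfl le_top hm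

section Purity

variable (A : Type u) [CommRing A] [Algebra R A]

theorem PossiblyImproperRegular.of_tensor
    (hpure : ∀ (M : Type u) [AddCommGroup M] [Module R M],
      Function.Injective (TensorProduct.mk R A M 1)) :
    ∀ (l : List R) (M : Type u) [AddCommGroup M] [Module R M],
      PossiblyImproperRegular R l (A ⊗[R] M) → PossiblyImproperRegular R l M
  | [], _, _, _, _ => trivial
  | a :: as, M, _, _, ⟨hreg, hquot⟩ => by
    refine ⟨fun m hm => (injective_iff_map_eq_zero _).mp (hpure M) m (hreg _ ?_), ?_⟩
    · rw [TensorProduct.mk_apply, ← TensorProduct.tmul_smul, hm, TensorProduct.tmul_zero]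
    · exact of_tensor hpure as _ (hquot.of_linearEquiv (tensorQuotSpanSMulTopEquiv A M a))

theorem IsRegularSeqOn.of_tensor
    (hpure : ∀ (M : Type u) [AddCommGroup M] [Module R M],
      Function.Injective (TensorProduct.mk R A M 1))
    {l : List R} {M : Type u} [AddCommGroup M] [Module R M]
    (h : IsRegularSeqOn R l (A ⊗[R] M)) : IsRegularSeqOn R l M :=
  ⟨PossiblyImproperRegular.of_tensor A hpure l M h.1,
    fun htop => h.2 (Submodule.smul_top_tensor_eq_top A htop)⟩

end Purity

section Retraction

variable {S : Type u} [CommRing S] [Algebra R S] (ρ : S →ₗ[R] R)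
  {M : Type u} [AddCommGroup M] [Module R M]

theorem eq_zero_of_tmul_eq_zero_of_map_span_eq_top {x : S}
    (hx : Submodule.map ρ ((Ideal.span {x}).restrictScalars R) = ⊤) {m : M}
    (h : x ⊗ₜ[R] m = 0) : m = 0 := by
  obtain ⟨y, hy, hρy⟩ : (1 : R) ∈ Submodule.map ρ ((Ideal.span {x}).restrictScalars R) :=
    hx ▸ trivial
  obtain ⟨c, rfl⟩ := Ideal.mem_span_singleton'.mp hy
  simpa [hρy] using
    congrArg ((TensorProduct.lid R M).toLinearMap ∘ₗ (ρ ∘ₗ LinearMap.mulLeft R c).rTensor M) h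

theorem exists_mem_tmul_eq_zero_of_one_tmul_eq_zero (T : Submonoid S)
    (A : Type u) [CommRing A] [Algebra S A] [Algebra R A] [IsScalarTower R S A]
    [IsLocalization T A] {m : M} (h : (1 : A) ⊗ₜ[R] m = 0) : ∃ x ∈ T, x ⊗ₜ[R] m = 0 := by
  have hloc : IsLocalizedModule T (TensorProduct.mk S A (S ⊗[R] M) 1) :=
    (isLocalizedModule_iff_isBaseChange T A _).mpr (TensorProduct.isBaseChange S (S ⊗[R] M) A)
  have h' : TensorProduct.mk S A (S ⊗[R] M) 1 ((1 : S) ⊗ₜ[R] m) = 0 := by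
    simpa using congrArg (AlgebraTensorModule.cancelBaseChange R S A A M).symm h
  obtain ⟨⟨x, hx⟩, hxm⟩ := (IsLocalizedModule.eq_zero_iff T _).mp h'
  exact ⟨x, hx, by simpa [TensorProduct.smul_tmul'] using hxm⟩

theorem injective_mk_one_localization_of_map_span_eq_top (T : Submonoid S)
    (hT : ∀ x ∈ T, Submodule.map ρ ((Ideal.span {x}).restrictScalars R) = ⊤)
    (A : Type u) [CommRing A] [Algebra S A] [Algebra R A] [IsScalarTower R S A]
    [IsLocalization T A] : Function.Injective (TensorProduct.mk R A M 1) := by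
  refine (injective_iff_map_eq_zero _).mpr fun m hm => ?_
  obtain ⟨x, hx, hxm⟩ := exists_mem_tmul_eq_zero_of_one_tmul_eq_zero T A hm
  exact eq_zero_of_tmul_eq_zero_of_map_span_eq_top ρ (hT x hx) hxm

end Retraction

theorem stmt_17_general {R S : Type u} [CommRing R] [CommRing S] [Algebra R S]
    (ρ : S →ₗ[R] R)
    (q : Ideal S) [q.IsMaximal]
    (hq : ∀ x : S, x ∉ q → Submodule.map ρ ((Ideal.span {x}).restrictScalars R) = ⊤)
    (M : Type u) [AddCommGroup M] [Module R M] (l : List R)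
    (h : IsRegularSeqOn R l (TensorProduct R (Localization.AtPrime q) M)) :
    IsRegularSeqOn R l M :=
  h.of_tensor _ fun _ _ _ =>
    injective_mk_one_localization_of_map_span_eq_top ρ q.primeCompl hq _

/-- Let `R ⊆ S` be commutative rings, `ρ : S → R` an `R`-module retraction, `q` a maximal
ideal of `S` with `ρ(xS) = R` for all `x ∈ S \ q`, and `M` an `R`-module. If a sequence `x`
of elements of `R` is a regular sequence on `S_q ⊗_R M`, then it is a regular sequence
on `M`. -/
theorem stmt_17 {R S : Type u} [CommRing R] [CommRing S] [Algebra R S]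
    (hinj : Function.Injective (algebraMap R S))
    (ρ : S →ₗ[R] R) (hρ : ∀ r : R, ρ (algebraMap R S r) = r)
    (q : Ideal S) [q.IsMaximal]
    (hq : ∀ x : S, x ∉ q → Submodule.map ρ ((Ideal.span {x}).restrictScalars R) = ⊤)
    (M : Type u) [AddCommGroup M] [Module R M] (l : List R)
    (h : IsRegularSeqOn R l (TensorProduct R (Localization.AtPrime q) M)) :
    IsRegularSeqOn R l M :=
  stmt_17_general ρ q hq M l h
end

section
/- Let S = C[[x,y]] be the formal power series ring over the complex numbers and R = C + xC[[x,y]] the subring of power series whose constant-coefficient part (as a series in y with coefficients in C[[x]]) lies in C + xC[[x]]. Then in R one has (xyR :_R x) = xyS = (xyR :_R x^2); in particular the annihilator chain of x modulo xyR stabilizes, so x is weakly proregular on R/xyR. -/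
open MvPowerSeries

/-- Membership in the subring `R = ℂ + x·ℂ[[x,y]]` of `S = ℂ[[x,y]]`. -/
def memR (f : MvPowerSeries (Fin 2) ℂ) : Prop :=
  ∃ (c : ℂ) (g : MvPowerSeries (Fin 2) ℂ), f = MvPowerSeries.C c + X 0 * g

/-!
Cancelling `x` turns `r x ∈ xyR` into `r ∈ yR`, and `r x² ∈ xyR` into `r x ∈ yR`, hence
`r ∈ yS` because distinct variables are coprime. Everything then rests on `yS ∩ R = xyS`:
an element of `R` divisible by `y` has constant term `0`, so it lies in `xS`, and
`xS ∩ yS = xyS`. Conversely `xyS ⊆ xR`, so both colon ideals contain `xyS`.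
-/

namespace MvPowerSeries

variable {σ R : Type*} [CommSemiring R]

theorem X_dvd_of_X_dvd_X_mul {i j : σ} (hij : i ≠ j) {f : MvPowerSeries σ R}
    (h : X i ∣ X j * f) : X i ∣ f := by
  classical
  rw [X_dvd_iff] at h ⊢
  intro m hm
  have := h (Finsupp.single j 1 + m) (by simp [hm, hij.symm])
  rwa [X, coeff_monomial_mul, if_pos le_self_add, add_tsub_cancel_left, one_mul] at this

theorem X_mul_X_dvd {i j : σ} (hij : i ≠ j) {f : MvPowerSeries σ R}
    (hi : X i ∣ f) (hj : X j ∣ f) : X i * X j ∣ f := by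
  obtain ⟨g, rfl⟩ := hj
  obtain ⟨h, rfl⟩ := X_dvd_of_X_dvd_X_mul hij hi
  exact ⟨h, by ring⟩

end MvPowerSeries

theorem memR_X_mul (g : MvPowerSeries (Fin 2) ℂ) : memR (X 0 * g) :=
  ⟨0, g, by simp⟩

theorem memR.X_dvd_of_X_dvd {r : MvPowerSeries (Fin 2) ℂ} (hr : memR r) (hy : X 1 ∣ r) :
    X 0 ∣ r := by
  obtain ⟨c, g, rfl⟩ := hr
  obtain ⟨b, hb⟩ := hy
  have hc : c = 0 := by
    simpa using congrArg constantCoeff hb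
  exact ⟨g, by simp [hc]⟩

theorem memR.X_mul_X_dvd {r : MvPowerSeries (Fin 2) ℂ} (hr : memR r) (hy : X 1 ∣ r) :
    X 0 * X 1 ∣ r :=
  MvPowerSeries.X_mul_X_dvd (by decide) (hr.X_dvd_of_X_dvd hy) hy

/-- In `R = ℂ + x·ℂ[[x,y]] ⊆ S = ℂ[[x,y]]` one has `(xyR :_R x) = xyS = (xyR :_R x²)`:
for `r ∈ R`, `rx ∈ xyR` iff `r ∈ xyS` iff `rx² ∈ xyR`.  In particular the annihilator
chain of `x` modulo `xyR` stabilizes, so `x` is weakly proregular on `R/xyR`. -/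
theorem stmt_18 (r : MvPowerSeries (Fin 2) ℂ) (hr : memR r) :
    ((∃ a, memR a ∧ r * X 0 = X 0 * X 1 * a) ↔
        (∃ s : MvPowerSeries (Fin 2) ℂ, r = X 0 * X 1 * s)) ∧
    ((∃ a, memR a ∧ r * (X 0) ^ 2 = X 0 * X 1 * a) ↔
        (∃ s : MvPowerSeries (Fin 2) ℂ, r = X 0 * X 1 * s)) := by
  have cancel_X {f g : MvPowerSeries (Fin 2) ℂ} (h : X 0 * f = X 0 * g) : f = g :=
    mul_left_cancel₀ (nonZeroDivisors.ne_zero X_mem_nonzeroDivisors) h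
  refine ⟨⟨?_, ?_⟩, ⟨?_, ?_⟩⟩
  · rintro ⟨a, -, h⟩
    have hry : r = X 1 * a := cancel_X (by linear_combination h)
    exact hr.X_mul_X_dvd ⟨a, hry⟩
  · rintro ⟨s, rfl⟩
    exact ⟨X 0 * s, memR_X_mul s, by ring⟩
  · rintro ⟨a, -, h⟩
    have hrx : r * X 0 = X 1 * a := cancel_X (by linear_combination h)
    have hxa : X 0 ∣ X 1 * a := ⟨r, by rw [← hrx, mul_comm]⟩
    obtain ⟨b, rfl⟩ := X_dvd_of_X_dvd_X_mul (by decide) hxa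
    have hry : r = X 1 * b := cancel_X (by linear_combination hrx)
    exact hr.X_mul_X_dvd ⟨b, hry⟩
  · rintro ⟨s, rfl⟩
    exact ⟨X 0 * (X 0 * s), memR_X_mul _, by ring⟩
end
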